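/- Let p_s, p_r ∈ (0,1), τ > 1, b = 1 - (1-τ)(p_s + p_r). Then the discriminant b² - 4τ(τ-1)·p_s·p_r is strictly positive. -/
import Mathlib

theorem discriminant_pos (ps pr τ : ℝ)
    (hps : ps ∈ Set.Ioo (0 : ℝ) 1) (hpr : pr ∈ Set.Ioo (0 : ℝ) 1)
    (hτ : 1 < τ) (b : ℝ) (hb : b = 1 - (1 - τ) * (ps + pr)) :
    0 < b ^ 2 - 4 * τ * (τ - 1) * ps * pr := by
  obtain ⟨h1, h2⟩ := hps
  obtain ⟨h3, h4⟩ := hpr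
  subst hb
  nlinarith [sq_nonneg ((τ-1)*(ps-pr)), mul_pos (mul_pos (sub_pos.2 hτ) h1) (sub_pos.2 h4),
    mul_pos (mul_pos (sub_pos.2 hτ) h3) (sub_pos.2 h2)]
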